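/- arXiv:1210.7572 — 4 statements merged into one kernel-verified Lean document; each statement's English description precedes it below -/
import Mathlib

section
/- For every integer $n \ge 2$, $\sum_{k=2}^n \left[(2k - 2) + (n^2 - k^2 + 1)^{1/2}\right] \ge \frac{3}{2}n^2 - \frac{7}{2}n + 1$. -/
lemma sumIcc_id (n : ℕ) (hn : 1 ≤ n) :
    ∑ k ∈ Finset.Icc 2 n, (k : ℝ) = ((n : ℝ) ^ 2 + (n : ℝ) - 2) / 2 := by
  induction n, hn using Nat.le_induction with
  | base => norm_num
  | succ m hm ih =>
    rw [Finset.sum_Icc_succ_top (by omega), ih]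
    push_cast
    ring

theorem stmt_4 (n : ℕ) (hn : 2 ≤ n) :
    ∑ k ∈ Finset.Icc 2 n,
        ((2 * (k : ℝ) - 2) + ((n : ℝ) ^ 2 - (k : ℝ) ^ 2 + 1) ^ ((1 : ℝ) / 2))
      ≥ 3 / 2 * (n : ℝ) ^ 2 - 7 / 2 * (n : ℝ) + 1 := by
  have key : ∑ k ∈ Finset.Icc 2 n, (((n : ℝ) - 2) + 2 * (k : ℝ) - (k : ℝ))
      ≤ ∑ k ∈ Finset.Icc 2 n,
        ((2 * (k : ℝ) - 2) + ((n : ℝ) ^ 2 - (k : ℝ) ^ 2 + 1) ^ ((1 : ℝ) / 2)) := by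
    apply Finset.sum_le_sum
    intro k hk
    obtain ⟨hk2, hkn⟩ := Finset.mem_Icc.mp hk
    have hkn' : (k : ℝ) ≤ (n : ℝ) := by exact_mod_cast hkn
    have hnonneg : (0 : ℝ) ≤ (n : ℝ) ^ 2 - (k : ℝ) ^ 2 + 1 := by nlinarith
    rw [← Real.sqrt_eq_rpow]
    have hs := Real.sq_sqrt hnonneg
    have hs0 := Real.sqrt_nonneg ((n : ℝ) ^ 2 - (k : ℝ) ^ 2 + 1)
    nlinarith [hs, hs0]
  have hsum : ∑ k ∈ Finset.Icc 2 n, (((n : ℝ) - 2) + 2 * (k : ℝ) - (k : ℝ))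
      = ((n : ℝ) - 1) * ((n : ℝ) - 2) + (((n : ℝ) ^ 2 + (n : ℝ) - 2) / 2) := by
    have h1 : ∀ k : ℕ, (((n : ℝ) - 2) + 2 * (k : ℝ) - (k : ℝ)) = ((n : ℝ) - 2) + (k : ℝ) := by
      intro k; ring
    simp only [h1]
    rw [Finset.sum_add_distrib, sumIcc_id n (by omega), Finset.sum_const, Nat.card_Icc]
    have : ((n + 1 - 2 : ℕ) : ℝ) = (n : ℝ) - 1 := by
      have h : n + 1 - 2 = n - 1 := by omega
      rw [h, Nat.cast_sub (by omega)]; norm_num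
    rw [nsmul_eq_mul, this]
  have hn' : (2 : ℝ) ≤ (n : ℝ) := by exact_mod_cast hn
  rw [ge_iff_le]
  calc 3 / 2 * (n : ℝ) ^ 2 - 7 / 2 * (n : ℝ) + 1
      ≤ ((n : ℝ) - 1) * ((n : ℝ) - 2) + (((n : ℝ) ^ 2 + (n : ℝ) - 2) / 2) := by nlinarith
    _ = ∑ k ∈ Finset.Icc 2 n, (((n : ℝ) - 2) + 2 * (k : ℝ) - (k : ℝ)) := hsum.symm
    _ ≤ _ := key
end

section
/- Let $T$ be a spanning tree of the $n \times n$ eight-neighbor grid ($n \ge 1$), rooted at the corner outlet $(0,0)$, such that every tree edge joins vertices that are adjacent in the grid. For $2 \le k \le n$, let $C_k$ be the set of vertices at king-move distance $k - 1$ from the outlet. Then $\sum_{x \in C_k} A_x \ge (2k - 1) + (n^2 - k^2)$, where $A_x$ is the number of vertices in the subtree of $T$ rooted at $x$. -/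
/-
Measured from the corner `(0,0)`, the king-graph distance is the norm `max i j`, and a
tree edge changes this norm by at most one. So walking up the tree from a vertex of norm at
least `k - 1` to the root (norm `0`), one must pass through a vertex of norm exactly `k - 1`,
i.e. through the stripe `C_k`. Hence the subtrees of the stripe vertices cover every vertex
outside the `(k-1) × (k-1)` corner square, and there are `n² - (k-1)² = (2k-1) + (n² - k²)`
of those.
-/

/-- The king-move (eight-neighbor) graph on `{0, …, n-1}²`: distinct vertices are
adjacent iff they differ by at most 1 in each coordinate. -/
def kingGraph (n : ℕ) : SimpleGraph (Fin n × Fin n) where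
  Adj x y := x ≠ y ∧ ((x.1 : ℤ) - (y.1 : ℤ)).natAbs ≤ 1 ∧ ((x.2 : ℤ) - (y.2 : ℤ)).natAbs ≤ 1
  symm := by
    constructor
    rintro x y ⟨h1, h2, h3⟩
    exact ⟨h1.symm, by omega, by omega⟩
  loopless := by constructor; rintro x ⟨h, -⟩; exact h rfl

open Finset

theorem exists_iterate_eq_of_le_succ {α : Type*} (f : α → α) (φ : α → ℕ)
    (hφ : ∀ x, φ x ≤ φ (f x) + 1) {c M : ℕ} {x : α} (hx : c ≤ φ x)
    (hM : φ (f^[M] x) ≤ c) :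
    ∃ m, φ (f^[m] x) = c := by
  induction M generalizing x with
  | zero => exact ⟨0, le_antisymm hM hx⟩
  | succ M ih =>
    rcases hx.eq_or_lt with hxc | hxc
    · exact ⟨0, hxc.symm⟩
    · obtain ⟨m, hm⟩ := ih (by have := hφ x; omega) hM
      exact ⟨m + 1, hm⟩

section KingGraph

variable {n : ℕ}

def kingNorm (v : Fin n × Fin n) : ℕ := max (v.1 : ℕ) v.2

theorem kingNorm_le_of_adj {u v : Fin n × Fin n} (h : (kingGraph n).Adj u v) :
    kingNorm u ≤ kingNorm v + 1 := by
  obtain ⟨-, h1, h2⟩ := h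
  unfold kingNorm
  omega

theorem kingNorm_le_add_length {u v : Fin n × Fin n} (p : (kingGraph n).Walk u v) :
    kingNorm v ≤ kingNorm u + p.length := by
  induction p with
  | nil => simp
  | cons h p ih =>
    have := kingNorm_le_of_adj h.symm
    rw [SimpleGraph.Walk.length_cons]
    omega

def towardCorner (v : Fin n × Fin n) : Fin n × Fin n :=
  (⟨v.1 - 1, (Nat.sub_le _ _).trans_lt v.1.isLt⟩,
    ⟨v.2 - 1, (Nat.sub_le _ _).trans_lt v.2.isLt⟩)

theorem kingNorm_towardCorner (v : Fin n × Fin n) :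
    kingNorm (towardCorner v) = kingNorm v - 1 := by
  simp only [kingNorm, towardCorner]
  omega

theorem towardCorner_adj {v : Fin n × Fin n} (hv : kingNorm v ≠ 0) :
    (kingGraph n).Adj (towardCorner v) v := by
  refine ⟨fun h => ?_, ?_, ?_⟩
  · have := congrArg kingNorm h
    rw [kingNorm_towardCorner] at this
    omega
  all_goals simp only [kingNorm, towardCorner] at hv ⊢; omega

theorem exists_walk_from_corner (hn : 0 < n) (v : Fin n × Fin n) :
    ∃ p : (kingGraph n).Walk (⟨0, hn⟩, ⟨0, hn⟩) v, p.length = kingNorm v := by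
  induction hN : kingNorm v generalizing v with
  | zero =>
    obtain ⟨a, b⟩ := v
    obtain ⟨rfl, rfl⟩ : a = ⟨0, hn⟩ ∧ b = ⟨0, hn⟩ := by
      simp only [kingNorm] at hN
      exact ⟨Fin.ext (show (a : ℕ) = 0 by omega), Fin.ext (show (b : ℕ) = 0 by omega)⟩
    exact ⟨.nil, rfl⟩
  | succ N ih =>
    obtain ⟨p, hp⟩ := ih (towardCorner v) (by rw [kingNorm_towardCorner]; omega)
    exact ⟨p.concat (towardCorner_adj (by omega)), by simp [hp]⟩

theorem kingGraph_dist_corner (hn : 0 < n) (v : Fin n × Fin n) :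
    (kingGraph n).dist (⟨0, hn⟩, ⟨0, hn⟩) v = kingNorm v := by
  obtain ⟨p, hp⟩ := exists_walk_from_corner hn v
  refine le_antisymm (hp ▸ SimpleGraph.dist_le p) ?_
  obtain ⟨q, hq⟩ := p.reachable.exists_walk_length_eq_dist
  have hcorner : kingNorm ((⟨0, hn⟩, ⟨0, hn⟩) : Fin n × Fin n) = 0 := by simp [kingNorm]
  have := kingNorm_le_add_length q
  omega

theorem card_filter_kingNorm_lt (j : ℕ) :
    #{v : Fin n × Fin n | kingNorm v < j} = min n j ^ 2 := by
  have : ({v | kingNorm v < j} : Finset (Fin n × Fin n))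
      = ({a | (a : ℕ) < j} : Finset (Fin n)) ×ˢ ({b | (b : ℕ) < j} : Finset (Fin n)) := by
    rw [← filter_product, univ_product_univ]
    simp [kingNorm]
  rw [this, card_product, Fin.card_filter_val_lt, sq]

theorem card_filter_le_kingNorm (j : ℕ) :
    #{v : Fin n × Fin n | j ≤ kingNorm v} = n ^ 2 - min n j ^ 2 := by
  have := card_filter_add_card_filter_not (s := univ) (fun v : Fin n × Fin n => j ≤ kingNorm v)
  simp only [not_le, card_filter_kingNorm_lt, card_univ, Fintype.card_prod,
    Fintype.card_fin] at this
  rw [sq]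
  omega

end KingGraph

open scoped Classical in
theorem stmt_13_general (n : ℕ) (hn : 0 < n)
    (parent : Fin n × Fin n → Fin n × Fin n)
    (root : Fin n × Fin n) (hrootdef : root = (⟨0, hn⟩, ⟨0, hn⟩))
    (hadj : ∀ v : Fin n × Fin n, v ≠ root → (kingGraph n).Adj (parent v) v)
    (hreach : ∀ v : Fin n × Fin n, ∃ m : ℕ, parent^[m] v = root)
    (A : Fin n × Fin n → ℕ)
    (hA : ∀ x : Fin n × Fin n,
      A x = (Finset.univ.filter fun y : Fin n × Fin n => ∃ m : ℕ, parent^[m] y = x).card)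
    (k : ℕ) (hkn : k ≤ n) :
    ∑ x ∈ Finset.univ.filter
        (fun v : Fin n × Fin n => (kingGraph n).dist root v = k - 1), A x
      ≥ (2 * k - 1) + (n ^ 2 - k ^ 2) := by
  subst hrootdef
  have hstep : ∀ v, kingNorm v ≤ kingNorm (parent v) + 1 := fun v => by
    by_cases hv : v = (⟨0, hn⟩, ⟨0, hn⟩)
    · simp [hv, kingNorm]
    · exact kingNorm_le_of_adj (hadj v hv).symm
  have hcover : ({v | k - 1 ≤ kingNorm v} : Finset (Fin n × Fin n)) ⊆
      ({v | (kingGraph n).dist (⟨0, hn⟩, ⟨0, hn⟩) v = k - 1} : Finset _).biUnion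
        fun x => {y | ∃ m, parent^[m] y = x} := by
    intro y hy
    obtain ⟨M, hM⟩ := hreach y
    obtain ⟨m, hm⟩ := exists_iterate_eq_of_le_succ parent kingNorm hstep (M := M)
      (mem_filter.1 hy).2 (by simp [hM, kingNorm])
    simp only [mem_biUnion, mem_filter, mem_univ, true_and, kingGraph_dist_corner]
    exact ⟨_, hm, m, rfl⟩
  have hsq : (k - 1) ^ 2 + (2 * k - 1) = k ^ 2 := by
    rcases k with _ | k
    · rfl
    · rw [Nat.add_sub_cancel, show 2 * (k + 1) - 1 = 2 * k + 1 by omega]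
      ring
  have hkn2 : k ^ 2 ≤ n ^ 2 := Nat.pow_le_pow_left hkn 2
  calc (2 * k - 1) + (n ^ 2 - k ^ 2) = n ^ 2 - min n (k - 1) ^ 2 := by
        rw [min_eq_right (by omega)]; omega
    _ = #{v | k - 1 ≤ kingNorm v} := (card_filter_le_kingNorm _).symm
    _ ≤ _ := (card_le_card hcover).trans card_biUnion_le
    _ = _ := by simp_rw [hA]

open scoped Classical in
/-- For a spanning tree of the `n × n` eight-neighbor grid rooted at the corner
outlet `(0,0)` (given by a parent map whose edges are grid edges and which
reaches the root from every vertex), the total subtree area of the stripe `C_k`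
of vertices at king-move distance `k - 1` from the outlet is at least
`(2k - 1) + (n² - k²)`, for `2 ≤ k ≤ n`. -/
theorem stmt_13 (n : ℕ) (hn : 0 < n)
    (parent : Fin n × Fin n → Fin n × Fin n)
    (root : Fin n × Fin n) (hrootdef : root = (⟨0, hn⟩, ⟨0, hn⟩))
    (hroot : parent root = root)
    (hadj : ∀ v : Fin n × Fin n, v ≠ root → (kingGraph n).Adj (parent v) v)
    (hreach : ∀ v : Fin n × Fin n, ∃ m : ℕ, parent^[m] v = root)
    (A : Fin n × Fin n → ℕ)
    (hA : ∀ x : Fin n × Fin n,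
      A x = (Finset.univ.filter fun y : Fin n × Fin n => ∃ m : ℕ, parent^[m] y = x).card)
    (k : ℕ) (hk2 : 2 ≤ k) (hkn : k ≤ n) :
    ∑ x ∈ Finset.univ.filter
        (fun v : Fin n × Fin n => (kingGraph n).dist root v = k - 1), A x
      ≥ (2 * k - 1) + (n ^ 2 - k ^ 2) :=
  stmt_13_general n hn parent root hrootdef hadj hreach A hA k hkn
end

section
/- For any spanning tree $s$ of the $n \times n$ eight-neighbor grid rooted at a corner outlet ($n \ge 2$), with unit link lengths, the energy $H_{1/2}(s) = \sum_{x \ne \text{outlet}} \sqrt{A_x}$ satisfies $H_{1/2}(s) \ge \frac{3}{2}n^2 - \frac{7}{2}n + 1$. -/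
open Finset

theorem Real.one_add_sqrt_add_sub_one_le_sqrt_add_sqrt {a b : ℝ} (ha : 1 ≤ a) (hb : 1 ≤ b) :
    1 + √(a + b - 1) ≤ √a + √b := by
  have hmul : √(a + b - 1) ≤ √a * √b := by
    rw [← Real.sqrt_mul (by linarith)]
    exact Real.sqrt_le_sqrt (by nlinarith [mul_nonneg (sub_nonneg.2 ha) (sub_nonneg.2 hb)])
  refine (pow_le_pow_iff_left₀ (by positivity) (by positivity) two_ne_zero).mp ?_
  rw [add_sq, add_sq, Real.sq_sqrt (by linarith), Real.sq_sqrt (by linarith),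
    Real.sq_sqrt (by linarith)]
  linarith

theorem Finset.card_sub_one_add_sqrt_le_sum_sqrt {ι : Type*} (s : Finset ι) (f : ι → ℝ)
    (hf : ∀ i ∈ s, 1 ≤ f i) :
    (#s - 1 : ℝ) + √(∑ i ∈ s, f i - #s + 1) ≤ ∑ i ∈ s, √(f i) := by
  induction s using Finset.cons_induction with
  | empty => simp
  | cons a s _ ih =>
    rw [forall_mem_cons] at hf
    have hs : (#s : ℝ) ≤ ∑ i ∈ s, f i := by
      simpa using Finset.card_nsmul_le_sum s f 1 hf.2
    have key := Real.one_add_sqrt_add_sub_one_le_sqrt_add_sqrt hf.1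
      (b := ∑ i ∈ s, f i - #s + 1) (by linarith)
    rw [show f a + (∑ i ∈ s, f i - #s + 1) - 1 = f a + ∑ i ∈ s, f i - (#s + 1) + 1 by ring] at key
    rw [sum_cons, sum_cons, card_cons]
    push_cast
    linarith [ih hf.2]

theorem Function.exists_iterate_eq_of_le_add_one {α : Type*} (f : α → α) (g : α → ℕ)
    (hg : ∀ a, g a ≤ g (f a) + 1) {a : α} {k m : ℕ} (hk : k ≤ g a) (hm : g (f^[m] a) ≤ k) :
    ∃ j, g (f^[j] a) = k := by
  by_contra! hne
  have hgt : ∀ j, k < g (f^[j] a) := by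
    intro j
    induction j with
    | zero => exact lt_of_le_of_ne hk (hne 0).symm
    | succ j ih =>
      have hstep := hg (f^[j] a)
      have hne' := hne (j + 1)
      rw [Function.iterate_succ_apply'] at hne' ⊢
      omega
  exact absurd hm (hgt m).not_ge

open scoped Classical in
theorem Function.card_le_sum_card_iterate_preimage {α : Type*} [Fintype α] (f : α → α)
    (g : α → ℕ) (hg : ∀ a, g a ≤ g (f a) + 1) (hreach : ∀ a, ∃ m, g (f^[m] a) = 0) (k : ℕ) :
    #{a | k ≤ g a} ≤ ∑ x ∈ {x | g x = k}, #{a | ∃ m, f^[m] a = x} := by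
  have hsub : ({a | k ≤ g a} : Finset α) ⊆
      ({x | g x = k} : Finset α).biUnion fun x => {a | ∃ m, f^[m] a = x} := by
    intro a ha
    obtain ⟨m, hm⟩ := hreach a
    obtain ⟨j, hj⟩ := exists_iterate_eq_of_le_add_one f g hg (mem_filter.mp ha).2 (hm ▸ k.zero_le)
    simpa using ⟨j, hj⟩
  exact (card_le_card hsub).trans card_biUnion_le

theorem add_sub_one_le_sum_sqrt {ι : Type*} (s : Finset ι) (A : ι → ℝ) (hA : ∀ i ∈ s, 1 ≤ A i)
    {n k : ℕ} (hkn : k < n) (hs : #s = 2 * k + 1) (hsum : (n : ℝ) ^ 2 - k ^ 2 ≤ ∑ i ∈ s, A i) :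
    (n + k - 1 : ℝ) ≤ ∑ i ∈ s, √(A i) := by
  have hkn' : (k + 1 : ℝ) ≤ n := by exact_mod_cast hkn
  have hsqrt : (n - k - 1 : ℝ) ≤ √(∑ i ∈ s, A i - (2 * k + 1) + 1) :=
    Real.le_sqrt_of_sq_le (by nlinarith)
  have := card_sub_one_add_sqrt_le_sum_sqrt s A hA
  rw [hs] at this
  push_cast at this
  linarith

namespace kingGraph

variable {n : ℕ}

def cornerDist (v : Fin n × Fin n) : ℕ := max (v.1 : ℕ) v.2

theorem cornerDist_le_cornerDist_add_one_of_adj {u v : Fin n × Fin n}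
    (h : (kingGraph n).Adj u v) : cornerDist v ≤ cornerDist u + 1 := by
  obtain ⟨-, h1, h2⟩ := h
  simp only [cornerDist]
  omega

theorem cornerDist_lt (v : Fin n × Fin n) : cornerDist v < n :=
  max_lt v.1.isLt v.2.isLt

theorem cornerDist_eq_zero_iff (hn : 0 < n) {v : Fin n × Fin n} :
    cornerDist v = 0 ↔ v = (⟨0, hn⟩, ⟨0, hn⟩) := by
  simp only [cornerDist, Nat.max_eq_zero_iff, Prod.ext_iff, Fin.ext_iff]

theorem card_cornerDist_lt {k : ℕ} (hk : k ≤ n) :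
    #{v : Fin n × Fin n | cornerDist v < k} = k ^ 2 := by
  have : univ.filter (fun v : Fin n × Fin n => cornerDist v < k) =
      univ.filter (fun i : Fin n => i < k) ×ˢ univ.filter (fun i : Fin n => i < k) := by
    ext v
    simp [cornerDist]
  rw [this, card_product, Fin.card_filter_val_lt, min_eq_right hk, sq]

theorem card_le_cornerDist {k : ℕ} (hk : k ≤ n) :
    #{v : Fin n × Fin n | k ≤ cornerDist v} = n ^ 2 - k ^ 2 := by
  have := card_filter_add_card_filter_not (s := univ) (fun v : Fin n × Fin n => cornerDist v < k)
  simp only [not_lt, card_univ, Fintype.card_prod, Fintype.card_fin, card_cornerDist_lt hk,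
    ← sq] at this
  have := Nat.pow_le_pow_left hk 2
  omega

theorem card_cornerDist_eq {k : ℕ} (hk : k < n) :
    #{v : Fin n × Fin n | cornerDist v = k} = 2 * k + 1 := by
  have hsplit : univ.filter (fun v : Fin n × Fin n => cornerDist v < k + 1) =
      univ.filter (fun v => cornerDist v = k) ∪ univ.filter (fun v => cornerDist v < k) := by
    ext v
    simp only [mem_filter, mem_univ, true_and, mem_union]
    omega
  have hdisj : Disjoint (univ.filter fun v : Fin n × Fin n => cornerDist v = k)
      (univ.filter fun v => cornerDist v < k) :=
    disjoint_filter.mpr fun _ _ h => h.not_lt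
  have := card_cornerDist_lt hk
  rw [hsplit, card_union_of_disjoint hdisj, card_cornerDist_lt hk.le] at this
  linarith

theorem sum_ne_corner_eq_sum_Ico_sum_cornerDist {M : Type*} [AddCommMonoid M] (hn : 0 < n)
    (f : Fin n × Fin n → M) :
    ∑ v ∈ {v | v ≠ (⟨0, hn⟩, ⟨0, hn⟩)}, f v =
      ∑ k ∈ Ico 1 n, ∑ v ∈ {v | cornerDist v = k}, f v := by
  rw [← sum_fiberwise_of_maps_to (g := cornerDist) (t := Ico 1 n)]
  · refine sum_congr rfl fun k hk => sum_congr ?_ fun _ _ => rfl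
    ext v
    simp only [mem_filter, mem_univ, true_and, and_iff_right_iff_imp]
    rintro rfl rfl
    exact (Nat.one_le_iff_ne_zero.mp (mem_Ico.mp hk).1) ((cornerDist_eq_zero_iff hn).mpr rfl)
  · intro v hv
    simp only [mem_filter, mem_univ, true_and] at hv
    simp only [mem_Ico]
    exact ⟨Nat.one_le_iff_ne_zero.mpr ((cornerDist_eq_zero_iff hn).not.mpr hv), cornerDist_lt v⟩

end kingGraph

open kingGraph

theorem sum_Ico_one_add_sub_one {n : ℕ} (hn : 0 < n) :
    ∑ k ∈ Ico 1 n, ((n : ℝ) + k - 1) = 3 / 2 * (n : ℝ) ^ 2 - 5 / 2 * n + 1 := by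
  have hgauss : ∀ m : ℕ, (∑ k ∈ range m, (k : ℝ)) * 2 = m * (m - 1) := by
    intro m
    induction m with
    | zero => simp
    | succ m ih => rw [sum_range_succ, add_mul, ih]; push_cast; ring
  rw [sum_Ico_eq_sub _ hn]
  simp only [sum_sub_distrib, sum_add_distrib, sum_const, card_range, nsmul_eq_mul, sum_range_one]
  linarith [hgauss n]

open scoped Classical in
theorem stmt_15_general (n : ℕ) (hn : 0 < n)
    (parent : Fin n × Fin n → Fin n × Fin n)
    (root : Fin n × Fin n) (hrootdef : root = (⟨0, hn⟩, ⟨0, hn⟩))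
    (hadj : ∀ v : Fin n × Fin n, v ≠ root → (kingGraph n).Adj (parent v) v)
    (hreach : ∀ v : Fin n × Fin n, ∃ m : ℕ, parent^[m] v = root)
    (A : Fin n × Fin n → ℕ)
    (hA : ∀ x : Fin n × Fin n,
      A x = (Finset.univ.filter fun y : Fin n × Fin n => ∃ m : ℕ, parent^[m] y = x).card) :
    ∑ x ∈ Finset.univ.filter (fun v : Fin n × Fin n => v ≠ root), Real.sqrt (A x)
      ≥ 3 / 2 * (n : ℝ) ^ 2 - 7 / 2 * (n : ℝ) + 1 := by
  subst hrootdef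
  have hroot := (cornerDist_eq_zero_iff hn).mpr rfl
  have hlevel (v : Fin n × Fin n) : cornerDist v ≤ cornerDist (parent v) + 1 := by
    by_cases hv : v = (⟨0, hn⟩, ⟨0, hn⟩)
    · simp [hv, hroot]
    · exact cornerDist_le_cornerDist_add_one_of_adj (hadj v hv)
  have hstripe : ∀ k ∈ Ico 1 n, (n + k - 1 : ℝ) ≤ ∑ x ∈ {v | cornerDist v = k}, √(A x) := by
    intro k hk
    have hkn := (mem_Ico.mp hk).2
    refine add_sub_one_le_sum_sqrt _ _ (fun x _ => ?_) hkn (card_cornerDist_eq hkn) ?_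
    · exact_mod_cast (hA x).trans_ge (card_pos.mpr ⟨x, by simpa using ⟨0, rfl⟩⟩)
    · have := (card_le_cornerDist hkn.le).symm.trans_le <|
        Function.card_le_sum_card_iterate_preimage parent cornerDist hlevel
          (fun v => (hreach v).imp fun _ hm => by rw [hm, hroot]) k
      simp only [← hA] at this
      rw [← Nat.cast_pow, ← Nat.cast_pow, ← Nat.cast_sub (Nat.pow_le_pow_left hkn.le 2)]
      exact_mod_cast this
  calc ∑ x ∈ {v | v ≠ (⟨0, hn⟩, ⟨0, hn⟩)}, √(A x)
      = ∑ k ∈ Ico 1 n, ∑ x ∈ {v | cornerDist v = k}, √(A x) :=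
        sum_ne_corner_eq_sum_Ico_sum_cornerDist hn _
    _ ≥ ∑ k ∈ Ico 1 n, ((n : ℝ) + k - 1) := sum_le_sum hstripe
    _ ≥ 3 / 2 * (n : ℝ) ^ 2 - 7 / 2 * (n : ℝ) + 1 := by
        rw [sum_Ico_one_add_sub_one hn]
        linarith [(n.cast_nonneg : (0 : ℝ) ≤ n)]

open scoped Classical in
/-- For any spanning tree of the `n × n` eight-neighbor grid rooted at a corner
outlet (`n ≥ 2`), with unit link lengths, the energy
`H_{1/2}(s) = ∑_{x ≠ outlet} √(A_x)` is at least `(3/2)n² - (7/2)n + 1`, where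
`A_x` is the subtree size at `x`. -/
theorem stmt_15 (n : ℕ) (hn2 : 2 ≤ n) (hn : 0 < n)
    (parent : Fin n × Fin n → Fin n × Fin n)
    (root : Fin n × Fin n) (hrootdef : root = (⟨0, hn⟩, ⟨0, hn⟩))
    (hroot : parent root = root)
    (hadj : ∀ v : Fin n × Fin n, v ≠ root → (kingGraph n).Adj (parent v) v)
    (hreach : ∀ v : Fin n × Fin n, ∃ m : ℕ, parent^[m] v = root)
    (A : Fin n × Fin n → ℕ)
    (hA : ∀ x : Fin n × Fin n,
      A x = (Finset.univ.filter fun y : Fin n × Fin n => ∃ m : ℕ, parent^[m] y = x).card) :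
    ∑ x ∈ Finset.univ.filter (fun v : Fin n × Fin n => v ≠ root), Real.sqrt (A x)
      ≥ 3 / 2 * (n : ℝ) ^ 2 - 7 / 2 * (n : ℝ) + 1 :=
  stmt_15_general n hn parent root hrootdef hadj hreach A hA
end

section
/- Consider the spanning tree $t$ of the $n \times n$ eight-neighbor grid rooted at corner $(0,0)$ in which each vertex $(i,j) \ne (0,0)$ links to a grid-adjacent vertex whose king-move distance to the outlet is exactly one less, namely the tree where $(i,j)$ with $i \ge j$ links to $(i-1, \min(j, i-1))$ and $(i,j)$ with $j > i$ links to $(\min(i, j-1), j-1)$. Then $H_1(t) = \sum_{x \ne (0,0)} A_x = \frac{4n^3 - 3n^2 - n}{6}$, so the lower bound $\frac{4n^3 - 3n^2 - n}{6}$ on $H_1$ is achieved. -/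
def treeParent (n : ℕ) (v : Fin n × Fin n) : Fin n × Fin n :=
  if v.1.val ≥ v.2.val then
    (⟨v.1.val - 1, by have := v.1.isLt; omega⟩,
     ⟨min v.2.val (v.1.val - 1), by have := v.2.isLt; omega⟩)
  else
    (⟨min v.1.val (v.2.val - 1), by have := v.1.isLt; omega⟩,
     ⟨v.2.val - 1, by have := v.2.isLt; omega⟩)

namespace Stmt16

def dd {n : ℕ} (v : Fin n × Fin n) : ℕ := max v.1.val v.2.val

lemma dd_parent {n : ℕ} (v : Fin n × Fin n) :
    dd (treeParent n v) = dd v - 1 := by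
  unfold treeParent dd
  split_ifs <;> simp <;> omega

lemma dd_iter {n : ℕ} (m : ℕ) (v : Fin n × Fin n) :
    dd ((treeParent n)^[m] v) = dd v - m := by
  induction m with
  | zero => simp
  | succ k ih =>
    rw [Function.iterate_succ_apply', dd_parent, ih]
    omega

lemma eq_root_of_dd {n : ℕ} (hn : 0 < n) (v : Fin n × Fin n) (h : dd v = 0) :
    v = (⟨0, hn⟩, ⟨0, hn⟩) := by
  unfold dd at h
  ext <;> simp <;> omega

open Classical in
lemma card_anc {n : ℕ} (hn : 0 < n) (y : Fin n × Fin n) :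
    ((Finset.univ.filter fun v : Fin n × Fin n => v ≠ (⟨0, hn⟩, ⟨0, hn⟩)).filter
      (fun x => ∃ m : ℕ, (treeParent n)^[m] y = x)).card = dd y := by
  rw [← Finset.card_range (dd y)]
  symm
  apply Finset.card_nbij (i := fun m => (treeParent n)^[m] y)
  · intro m hm
    simp only [Finset.mem_coe, Finset.mem_range] at hm
    simp only [Finset.mem_coe, Finset.mem_filter, Finset.mem_univ, true_and]
    refine ⟨?_, m, rfl⟩
    intro hc
    have := dd_iter m y
    rw [hc] at this
    simp only [dd] at this hm
    simp at this
    omega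
  · intro a ha b hb hab
    simp only [Finset.coe_range, Set.mem_Iio] at ha hb
    replace hab : (treeParent n)^[a] y = (treeParent n)^[b] y := hab
    have h1 := dd_iter a y
    have h2 := dd_iter b y
    rw [hab] at h1
    omega
  · intro x hx
    simp only [Finset.coe_filter, Set.mem_setOf_eq, Finset.mem_filter, Finset.mem_univ,
      true_and] at hx
    obtain ⟨hne, m, hm⟩ := hx
    refine ⟨m, ?_, hm⟩
    simp only [Finset.coe_range, Set.mem_Iio]
    by_contra hge
    have := dd_iter m y
    rw [hm] at this
    exact hne (eq_root_of_dd hn x (by omega))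

lemma sum_max (n : ℕ) :
    6 * (∑ i ∈ Finset.range n, ∑ j ∈ Finset.range n, max i j) + 3 * n ^ 2 + n
      = 4 * n ^ 3 := by
  induction n with
  | zero => simp
  | succ n ih =>
    rw [Finset.sum_range_succ]
    have h1 : ∀ i ∈ Finset.range n,
        (∑ j ∈ Finset.range (n + 1), max i j)
          = (∑ j ∈ Finset.range n, max i j) + n := by
      intro i hi
      rw [Finset.sum_range_succ]
      simp only [Finset.mem_range] at hi
      congr 1
      omega
    rw [Finset.sum_congr rfl h1, Finset.sum_add_distrib, Finset.sum_const,
      Finset.card_range, Finset.sum_range_succ]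
    have h2 : (∑ j ∈ Finset.range n, max n j) = n * n := by
      rw [Finset.sum_congr rfl
        (fun j hj => by
          simp only [Finset.mem_range] at hj
          omega : ∀ j ∈ Finset.range n, max n j = n),
        Finset.sum_const, Finset.card_range, smul_eq_mul]
    rw [h2]
    simp only [smul_eq_mul, Nat.max_self]
    nlinarith [ih]

end Stmt16

open scoped Classical in
/-- For the explicit stripe-following spanning tree `t` of the `n × n`
eight-neighbor grid rooted at the corner `(0,0)`, the energy
`H₁(t) = ∑_{x ≠ (0,0)} A_x` equals `(4n³ - 3n² - n)/6` exactly, so the lower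
bound on `H₁` is achieved. -/
theorem stmt_16 (n : ℕ) (hn : 0 < n)
    (root : Fin n × Fin n) (hrootdef : root = (⟨0, hn⟩, ⟨0, hn⟩))
    (A : Fin n × Fin n → ℕ)
    (hA : ∀ x : Fin n × Fin n,
      A x = (Finset.univ.filter fun y : Fin n × Fin n =>
        ∃ m : ℕ, (treeParent n)^[m] y = x).card) :
    ((∑ x ∈ Finset.univ.filter (fun v : Fin n × Fin n => v ≠ root), A x : ℕ) : ℝ)
      = (4 * (n : ℝ) ^ 3 - 3 * (n : ℝ) ^ 2 - (n : ℝ)) / 6 := by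
  subst hrootdef
  have key : (∑ x ∈ Finset.univ.filter
      (fun v : Fin n × Fin n => v ≠ (⟨0, hn⟩, ⟨0, hn⟩)), A x)
      = ∑ y : Fin n × Fin n, Stmt16.dd y := by
    simp only [hA, Finset.card_filter]
    rw [Finset.sum_comm]
    refine Finset.sum_congr rfl fun y _ => ?_
    rw [← Finset.card_filter]
    exact Stmt16.card_anc hn y
  rw [key]
  have hsum : (∑ y : Fin n × Fin n, Stmt16.dd y)
      = ∑ i ∈ Finset.range n, ∑ j ∈ Finset.range n, max i j := by
    rw [Fintype.sum_prod_type]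
    have h1 : ∀ i : Fin n, (∑ j : Fin n, Stmt16.dd (i, j))
        = ∑ j ∈ Finset.range n, max i.val j := by
      intro i
      exact Fin.sum_univ_eq_sum_range (fun j => max i.val j) n
    rw [Finset.sum_congr rfl (fun i _ => h1 i)]
    exact Fin.sum_univ_eq_sum_range (fun i => ∑ j ∈ Finset.range n, max i j) n
  rw [hsum]
  have h6 := Stmt16.sum_max n
  set S := ∑ i ∈ Finset.range n, ∑ j ∈ Finset.range n, max i j with hS
  have h6' : (6 * S + 3 * n ^ 2 + n : ℝ) = 4 * n ^ 3 := by exact_mod_cast h6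
  push_cast at h6'
  rw [eq_div_iff (by norm_num : (6:ℝ) ≠ 0)]
  linarith
end
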